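/- (Edge-score formula for the asymptotic consensus value.) Let W be an n×n row-stochastic, irreducible, aperiodic matrix with stationary distribution π and mean first passage time matrix (m_{ij}), satisfying rational selfishness at node r. Let W̃ be the single-edge perturbation of W by edge (r,c) with weight θ, assumed irreducible and aperiodic, with stationary distribution π̃. Then for every vector x̃ ∈ ℝ^n, the decrease of the asymptotic consensus value satisfies ⟨π, x̃⟩ − ⟨π̃, x̃⟩ = θ · [ Σ_{j=1}^n π_j · (m_{cj}·(1 − δ{j=c}) − m_{rj} + 1) · x̃_j ] / (m_{rr} + θ·(m_{cr} − m_{rr} + 1)). -/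

import Mathlib

open Matrix Finset Filter

/-- `W` is row-stochastic: nonnegative entries, each row sums to 1. -/
def RowStochastic {n : ℕ} (W : Matrix (Fin n) (Fin n) ℝ) : Prop :=
  (∀ i j, 0 ≤ W i j) ∧ ∀ i, ∑ j, W i j = 1

/-- `W` is irreducible and aperiodic, i.e. primitive: some power has all entries positive. -/
def Primitive {n : ℕ} (W : Matrix (Fin n) (Fin n) ℝ) : Prop :=
  ∃ N : ℕ, ∀ i j, 0 < (W ^ N) i j

/-- `π` is the stationary distribution of `W`: positive entries, summing to 1, `πᵀ W = πᵀ`. -/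
def IsStationaryDist {n : ℕ} (W : Matrix (Fin n) (Fin n) ℝ) (π : Fin n → ℝ) : Prop :=
  (∀ i, 0 < π i) ∧ (∑ i, π i = 1) ∧ π ᵥ* W = π

/-- `M` is a mean first passage time matrix of `W`: positive entries satisfying the
one-hop conditioning equations `m i j = 1 + ∑_{k ≠ j} w i k * m k j`. -/
def IsMFPT {n : ℕ} (W M : Matrix (Fin n) (Fin n) ℝ) : Prop :=
  (∀ i j, 0 < M i j) ∧ ∀ i j, M i j = 1 + ∑ k, if k ≠ j then W i k * M k j else 0

/-- The single-edge perturbation `W̃ = W − θ·diag(e r)·W + θ·(e r)(e c)ᵀ` of `W` by the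
directed edge `(r, c)` with weight `θ`: row `r` of `W` is multiplied by `1 − θ` and `θ`
is added in entry `(r, c)`. -/
def EdgePerturb {n : ℕ} (W : Matrix (Fin n) (Fin n) ℝ) (r c : Fin n) (θ : ℝ) :
    Matrix (Fin n) (Fin n) ℝ :=
  Matrix.of fun i j => if i = r then (1 - θ) * W i j + (if j = c then θ else 0) else W i j

/-! The mean first passage times satisfy `M = 𝟙 + W (M - diag M)`. Pairing this with a
probability vector `p` with `p W = p - q` gives `p j M j j = 1 - Σ_{k ≠ j} q k M k j`. For the
stationary distribution of `W` (`q = 0`) this is Kac's formula `π j M j j = 1`; the stationary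
distribution `π'` of the perturbed chain is stationary for `W` up to the defect
`q = θ π' r (e c - W r)`, and the two identities give `π j - π' j = θ π' r π j s j` with
`s = edgeScore M r c`. At `j = r` the identity for `π'` determines `π' r`, which is the
denominator. -/

section FirstPassage

variable {ι : Type*} [Fintype ι] [DecidableEq ι]

theorem sum_ite_ne_eq_sub {G : Type*} [AddCommGroup G] (f : ι → G) (j : ι) :
    ∑ k, (if k ≠ j then f k else 0) = ∑ k, f k - f j := by
  rw [← Finset.sum_filter, Finset.filter_ne', Finset.sum_erase_eq_sub (Finset.mem_univ j)]

def MFPTEquations (W M : Matrix ι ι ℝ) : Prop :=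
  ∀ i j, M i j = 1 + ∑ k, if k ≠ j then W i k * M k j else 0

variable {W M : Matrix ι ι ℝ}

theorem mul_diag_eq_of_vecMul_eq_sub
    (hM : MFPTEquations W M)
    {p q : ι → ℝ} (hp : ∑ i, p i = 1) (hpq : p ᵥ* W = p - q)
    (j : ι) : p j * M j j = 1 - ∑ k, if k ≠ j then q k * M k j else 0 := by
  have hM' : ∀ k, M k j = 1 + ∑ m, W k m * M m j - W k j * M j j := fun k => by
    rw [hM k j, sum_ite_ne_eq_sub]; ring
  have hstat : ∀ m, ∑ k, p k * W k m = p m - q m := fun m => by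
    simpa [vecMul, dotProduct] using congrFun hpq m
  have hpM : ∑ k, p k * M k j = 1 + ∑ m, (p m - q m) * M m j - (p j - q j) * M j j := by
    calc ∑ k, p k * M k j
        = ∑ k, p k * (1 + ∑ m, W k m * M m j - W k j * M j j) :=
          Finset.sum_congr rfl fun k _ => by rw [← hM' k]
      _ = ∑ k, p k + ∑ m, (∑ k, p k * W k m) * M m j - (∑ k, p k * W k j) * M j j := by
          simp only [mul_add, mul_sub, mul_one, Finset.sum_add_distrib, Finset.sum_sub_distrib,
            Finset.mul_sum, Finset.sum_mul, mul_assoc]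
          rw [Finset.sum_comm]
      _ = _ := by simp only [hp, hstat]
  rw [sum_ite_ne_eq_sub]
  simp only [sub_mul, Finset.sum_sub_distrib] at hpM
  linarith

theorem stationary_mul_diag_eq_one
    (hM : MFPTEquations W M)
    {π : ι → ℝ} (hπ : ∑ i, π i = 1) (hπW : π ᵥ* W = π) (j : ι) :
    π j * M j j = 1 := by
  simpa using mul_diag_eq_of_vecMul_eq_sub hM hπ (q := 0) (by rw [hπW, sub_zero]) j

end FirstPassage

section EdgePerturbation

variable {n : ℕ} {W M : Matrix (Fin n) (Fin n) ℝ} {r c : Fin n} {θ : ℝ}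

def edgeScore (M : Matrix (Fin n) (Fin n) ℝ) (r c j : Fin n) : ℝ :=
  M c j * (if j = c then 0 else 1) - M r j + 1

theorem vecMul_edgePerturb (p : Fin n → ℝ) :
    p ᵥ* EdgePerturb W r c θ =
      p ᵥ* W + (θ * p r) • (Pi.single c 1 - W r : Fin n → ℝ) := by
  ext k
  have hrow : ∀ i, p i * EdgePerturb W r c θ i k
      = p i * W i k +
        if i = r then θ * p r * ((Pi.single c 1 : Fin n → ℝ) k - W r k) else 0 := by
    intro i
    by_cases hi : i = r
    · subst hi
      by_cases hk : k = c <;> simp [EdgePerturb, hk] <;> ring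
    · simp [EdgePerturb, hi]
  simp only [vecMul, dotProduct, Finset.sum_congr rfl fun i _ => hrow i, Finset.sum_add_distrib,
    Finset.sum_ite_eq', Finset.mem_univ, if_true, Pi.add_apply, Pi.sub_apply, Pi.smul_apply,
    smul_eq_mul]

theorem sum_ne_mul_single_sub_row_eq_edgeScore
    (hM : MFPTEquations W M) (a : ℝ) (j : Fin n) :
    ∑ k, (if k ≠ j then (a • (Pi.single c 1 - W r : Fin n → ℝ)) k * M k j else 0) =
      a * edgeScore M r c j := by
  have hrow := hM r j
  rw [sum_ite_ne_eq_sub] at hrow ⊢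
  rcases eq_or_ne j c with rfl | hjc
  · simp [edgeScore, Pi.single_apply, mul_sub, sub_mul, mul_assoc, ← Finset.mul_sum]
    linear_combination a * hrow
  · simp [edgeScore, Pi.single_apply, hjc, mul_sub, sub_mul, mul_assoc, ← Finset.mul_sum]
    linear_combination a * hrow

theorem edgeScore_self_left (hrc : r ≠ c) : edgeScore M r c r = M c r - M r r + 1 := by
  simp [edgeScore, hrc]

variable {π' : Fin n → ℝ}

theorem stationary_edgePerturb_mul_diag
    (hM : MFPTEquations W M)
    (hπ' : ∑ i, π' i = 1) (hπ'W : π' ᵥ* EdgePerturb W r c θ = π') (j : Fin n) :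
    π' j * M j j = 1 - θ * π' r * edgeScore M r c j := by
  have hdefect : π' ᵥ* W = π' - (θ * π' r) • (Pi.single c 1 - W r : Fin n → ℝ) := by
    have h := vecMul_edgePerturb (W := W) (r := r) (c := c) (θ := θ) π'
    rw [hπ'W] at h
    exact eq_sub_of_add_eq h.symm
  rw [mul_diag_eq_of_vecMul_eq_sub hM hπ' hdefect j, sum_ne_mul_single_sub_row_eq_edgeScore hM]

theorem stationary_edgePerturb_apply_self_mul_eq_one
    (hM : MFPTEquations W M)
    (hrc : r ≠ c) (hπ' : ∑ i, π' i = 1) (hπ'W : π' ᵥ* EdgePerturb W r c θ = π') :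
    π' r * (M r r + θ * (M c r - M r r + 1)) = 1 := by
  have h := stationary_edgePerturb_mul_diag hM hπ' hπ'W r
  rw [edgeScore_self_left hrc] at h
  linear_combination h

theorem sub_stationary_edgePerturb
    (hM : MFPTEquations W M)
    {π : Fin n → ℝ} (hπ : ∑ i, π i = 1) (hπW : π ᵥ* W = π)
    (hπ' : ∑ i, π' i = 1) (hπ'W : π' ᵥ* EdgePerturb W r c θ = π') (j : Fin n) :
    π j - π' j = θ * π' r * (π j * edgeScore M r c j) := by
  linear_combination π' j * stationary_mul_diag_eq_one hM hπ hπW j -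
    π j * stationary_edgePerturb_mul_diag hM hπ' hπ'W j

end EdgePerturbation

theorem edge_score_formula_general {n : ℕ}
    (W : Matrix (Fin n) (Fin n) ℝ) (π : Fin n → ℝ) (M : Matrix (Fin n) (Fin n) ℝ)
    (hπ : IsStationaryDist W π) (hM : IsMFPT W M)
    (r c : Fin n) (hrc : r ≠ c)
    (θ : ℝ)
    (π' : Fin n → ℝ)
    (hπ' : IsStationaryDist (EdgePerturb W r c θ) π') :
    ∀ x : Fin n → ℝ,
      (∑ j, π j * x j) - (∑ j, π' j * x j) =
        θ * (∑ j, π j * (M c j * (if j = c then 0 else 1) - M r j + 1) * x j) /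
          (M r r + θ * (M c r - M r r + 1)) := by
  intro x
  have hπ'r := stationary_edgePerturb_apply_self_mul_eq_one hM.2 hrc hπ'.2.1 hπ'.2.2
  rw [eq_div_iff (right_ne_zero_of_mul_eq_one hπ'r), ← Finset.sum_sub_distrib]
  calc (∑ j, (π j * x j - π' j * x j)) * (M r r + θ * (M c r - M r r + 1))
      = (∑ j, θ * π' r * (π j * edgeScore M r c j) * x j) *
          (M r r + θ * (M c r - M r r + 1)) := by
        simp_rw [← sub_mul, sub_stationary_edgePerturb hM.2 hπ.2.1 hπ.2.2 hπ'.2.1 hπ'.2.2]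
    _ = θ * (π' r * (M r r + θ * (M c r - M r r + 1))) *
          ∑ j, π j * edgeScore M r c j * x j := by
        rw [Finset.sum_mul, Finset.mul_sum]
        exact Finset.sum_congr rfl fun j _ => by ring
    _ = θ * ∑ j, π j * (M c j * (if j = c then 0 else 1) - M r j + 1) * x j := by
        rw [hπ'r, mul_one]; rfl

/-- Edge-score formula for the asymptotic consensus value. -/
theorem edge_score_formula {n : ℕ}
    (W : Matrix (Fin n) (Fin n) ℝ) (π : Fin n → ℝ) (M : Matrix (Fin n) (Fin n) ℝ)
    (hW : RowStochastic W) (hprim : Primitive W) (hπ : IsStationaryDist W π) (hM : IsMFPT W M)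
    (r c : Fin n) (hrc : r ≠ c) (hWrc : W r c = 0)
    (θ : ℝ) (hθ0 : 0 < θ) (hθ1 : θ ≤ 1)
    (hself : ∀ j, j ≠ r → W r j < W r r)
    (π' : Fin n → ℝ) (hprim' : Primitive (EdgePerturb W r c θ))
    (hπ' : IsStationaryDist (EdgePerturb W r c θ) π') :
    ∀ x : Fin n → ℝ,
      (∑ j, π j * x j) - (∑ j, π' j * x j) =
        θ * (∑ j, π j * (M c j * (if j = c then 0 else 1) - M r j + 1) * x j) /
          (M r r + θ * (M c r - M r r + 1)) :=
  edge_score_formula_general W π M hπ hM r c hrc θ π' hπ'
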